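/- arXiv:2302.01989 — 8 statements merged into one kernel-verified Lean document; each statement's English description precedes it below -/
import Mathlib

section
/- For every approval instance, every feasible committee that satisfies EJR+ also satisfies EJR. -/
/-! If an `ℓ`-cohesive group violated EJR, any of its voters would have fewer than `ℓ` approved
winners, so one of the `ℓ` commonly approved candidates is not elected; that candidate, together
with the whole group, violates EJR+. -/

/-- A feasible committee `W` satisfies EJR+: there is no candidate `c ∉ W`,
group of voters `N'`, and natural number `ℓ ≥ 1` with `|N'| ≥ ℓ·n/k` such that
`c ∈ A i` and `|A i ∩ W| < ℓ` for all `i ∈ N'`. -/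
def EJRplus {V C : Type*} [Fintype V] [DecidableEq C]
    (A : V → Finset C) (k : ℕ) (W : Finset C) : Prop :=
  ¬ ∃ (c : C) (N' : Finset V) (ℓ : ℕ), 1 ≤ ℓ ∧ c ∉ W ∧
      (ℓ : ℚ) * (Fintype.card V) / k ≤ N'.card ∧
      (∀ i ∈ N', c ∈ A i ∧ (A i ∩ W).card < ℓ)

/-- `N'` is an `ℓ`-cohesive group: `|N'| ≥ ℓ·n/k` and `|⋂_{i ∈ N'} A i| ≥ ℓ`. -/
def Cohesive {V C : Type*} [Fintype V] [Fintype C] [DecidableEq V] [DecidableEq C]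
    (A : V → Finset C) (k ℓ : ℕ) (N' : Finset V) : Prop :=
  (ℓ : ℚ) * (Fintype.card V) / k ≤ N'.card ∧
    ℓ ≤ (Finset.univ.filter fun c : C => ∀ i ∈ N', c ∈ A i).card

/-- A feasible committee `W` satisfies EJR: for every `ℓ ≥ 1` and every
`ℓ`-cohesive group `N'` there is a voter `i ∈ N'` with `|A i ∩ W| ≥ ℓ`. -/
def EJR {V C : Type*} [Fintype V] [Fintype C] [DecidableEq V] [DecidableEq C]
    (A : V → Finset C) (k : ℕ) (W : Finset C) : Prop :=
  ∀ ℓ : ℕ, 1 ≤ ℓ → ∀ N' : Finset V, Cohesive A k ℓ N' → ∃ i ∈ N', ℓ ≤ (A i ∩ W).card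

open Finset

theorem Cohesive.nonempty {V C : Type*} [Fintype V] [Fintype C] [DecidableEq V] [DecidableEq C]
    {A : V → Finset C} {k ℓ : ℕ} {N' : Finset V} (hN' : Cohesive A k ℓ N')
    (hn : 1 ≤ Fintype.card V) (hk : 1 ≤ k) (hℓ : 1 ≤ ℓ) : N'.Nonempty := by
  have hquota : (0 : ℚ) < ℓ * Fintype.card V / k := by
    have : (0 : ℚ) < ℓ := by exact_mod_cast hℓ
    have : (0 : ℚ) < Fintype.card V := by exact_mod_cast hn
    have : (0 : ℚ) < k := by exact_mod_cast hk
    positivity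
  rw [← card_pos]
  exact_mod_cast hquota.trans_le hN'.1

theorem ejrplus_implies_ejr_general {V C : Type*} [Fintype V] [Fintype C] [DecidableEq V] [DecidableEq C]
    (A : V → Finset C) (k : ℕ) (W : Finset C)
    (hn : 1 ≤ Fintype.card V) (hk1 : 1 ≤ k) (h : EJRplus A k W) :
    EJR A k W := by
  intro ℓ hℓ N' hN'
  by_contra! hfew
  obtain ⟨i, hi⟩ := hN'.nonempty hn hk1 hℓ
  obtain ⟨c, hc, hci⟩ := exists_mem_notMem_of_card_lt_card ((hfew i hi).trans_le hN'.2)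
  have hc_common : ∀ j ∈ N', c ∈ A j := (mem_filter.1 hc).2
  have hcW : c ∉ W := fun hcW => hci (mem_inter.2 ⟨hc_common i hi, hcW⟩)
  exact h ⟨c, N', ℓ, hℓ, hcW, hN'.1, fun j hj => ⟨hc_common j hj, hfew j hj⟩⟩

/-- every feasible committee satisfying EJR+ also satisfies EJR. -/
theorem ejrplus_implies_ejr {V C : Type*} [Fintype V] [Fintype C] [DecidableEq V] [DecidableEq C]
    (A : V → Finset C) (k : ℕ) (W : Finset C)
    (hn : 1 ≤ Fintype.card V) (hk1 : 1 ≤ k) (hk2 : k ≤ Fintype.card C)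
    (hW : W.card ≤ k) (h : EJRplus A k W) :
    EJR A k W :=
  ejrplus_implies_ejr_general A k W hn hk1 h
end

section
/- For every approval instance, every feasible committee that is priceable with a price system whose budget B satisfies B > k also satisfies PJR+. -/
open Finset

/-- A price system for committee `W` with budget `B`: payment functions
`p i : C → [0, B/n]` satisfying conditions (C1)–(C5). -/
def PriceSystem {V C : Type*} [Fintype V] [Fintype C] [DecidableEq V] [DecidableEq C]
    (A : V → Finset C) (W : Finset C) (B : ℝ) (p : V → C → ℝ) : Prop :=
  (∀ i c, 0 ≤ p i c ∧ p i c ≤ B / (Fintype.card V)) ∧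
  -- (C1)
  (∀ i c, c ∉ A i → p i c = 0) ∧
  -- (C2)
  (∀ i : V, ∑ c : C, p i c ≤ B / (Fintype.card V)) ∧
  -- (C3)
  (∀ c ∈ W, ∑ i : V, p i c = 1) ∧
  -- (C4)
  (∀ c ∉ W, ∑ i : V, p i c = 0) ∧
  -- (C5)
  (∀ c ∉ W, ∑ i ∈ Finset.univ.filter (fun i => c ∈ A i),
      (B / (Fintype.card V) - ∑ c' : C, p i c') ≤ 1)

/-- A feasible committee `W` satisfies PJR+. -/
def PJRplus {V C : Type*} [Fintype V] [DecidableEq V] [DecidableEq C]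
    (A : V → Finset C) (k : ℕ) (W : Finset C) : Prop :=
  ¬ ∃ (c : C) (N' : Finset V) (ℓ : ℕ), 1 ≤ ℓ ∧ c ∉ W ∧
      (ℓ : ℚ) * (Fintype.card V) / k ≤ N'.card ∧
      (∀ i ∈ N', c ∈ A i) ∧ (N'.biUnion A ∩ W).card < ℓ

/-!
Voters of a group `N'` pay only for committee members they approve, and each committee member
costs exactly `1`, so together they spend at most `|(⋃_{i ∈ N'} A_i) ∩ W| ≤ ℓ - 1`. Their
budget is `|N'| B / n ≥ ℓ B / k > ℓ`, so more than `1` of it is left over. If all of `N'`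
approve some `c ∉ W`, this contradicts (C5) for `c`.
-/

namespace PriceSystem

variable {V C : Type*} [Fintype V] [Fintype C] [DecidableEq V] [DecidableEq C]
  {A : V → Finset C} {W : Finset C} {B : ℝ} {p : V → C → ℝ}

theorem nonneg (hp : PriceSystem A W B p) (i : V) (c : C) : 0 ≤ p i c :=
  (hp.1 i c).1

theorem eq_zero_of_notMem_inter (hp : PriceSystem A W B p) {i : V} {c : C}
    (hc : c ∉ A i ∩ W) : p i c = 0 := by
  obtain ⟨hbound, hC1, -, -, hC4, -⟩ := hp
  by_cases hcA : c ∈ A i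
  · have hcW : c ∉ W := fun hcW => hc (mem_inter.2 ⟨hcA, hcW⟩)
    exact (sum_eq_zero_iff_of_nonneg fun j _ => (hbound j c).1).1 (hC4 c hcW) i (mem_univ i)
  · exact hC1 i c hcA

theorem sum_sum_le_card_biUnion_inter (hp : PriceSystem A W B p) (T : Finset V) :
    ∑ i ∈ T, ∑ c, p i c ≤ ((T.biUnion A ∩ W).card : ℝ) := by
  set S := T.biUnion A ∩ W
  have hsupport : ∀ i ∈ T, ∑ c ∈ S, p i c = ∑ c, p i c := fun i hi =>
    sum_subset (subset_univ S) fun c _ hcS => hp.eq_zero_of_notMem_inter fun hc =>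
      hcS (mem_inter.2 ⟨mem_biUnion.2 ⟨i, hi, (mem_inter.1 hc).1⟩, (mem_inter.1 hc).2⟩)
  calc ∑ i ∈ T, ∑ c, p i c = ∑ c ∈ S, ∑ i ∈ T, p i c := by
        rw [← sum_congr rfl hsupport, sum_comm]
    _ ≤ ∑ c ∈ S, ∑ i, p i c :=
        sum_le_sum fun c _ => sum_le_sum_of_subset_of_nonneg (subset_univ T)
          fun i _ _ => hp.nonneg i c
    _ = S.card := by
        obtain ⟨-, -, -, hC3, -, -⟩ := hp
        rw [sum_congr rfl fun c hc => hC3 c (mem_inter.1 hc).2, sum_const, nsmul_one]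

theorem sum_leftover_le_one (hp : PriceSystem A W B p) {c : C} (hc : c ∉ W)
    {T : Finset V} (hT : ∀ i ∈ T, c ∈ A i) :
    ∑ i ∈ T, (B / Fintype.card V - ∑ c', p i c') ≤ 1 := by
  obtain ⟨-, -, hC2, -, -, hC5⟩ := hp
  exact (sum_le_sum_of_subset_of_nonneg (fun i hi => mem_filter.2 ⟨mem_univ i, hT i hi⟩)
    fun i _ _ => sub_nonneg.2 (hC2 i)).trans (hC5 c hc)

end PriceSystem

theorem lt_mul_div_of_mul_le_mul {ℓ n m k B : ℝ} (hℓ : 0 < ℓ) (hn : 0 < n) (hm : 0 ≤ m)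
    (h : ℓ * n ≤ m * k) (hkB : k < B) : ℓ < m * (B / n) := by
  have hm' : 0 < m := hm.lt_of_ne fun hm0 => by
    subst hm0
    nlinarith [mul_pos hℓ hn]
  rw [← mul_div_assoc, lt_div_iff₀ hn]
  nlinarith

theorem priceable_implies_pjrplus_general {V C : Type*} [Fintype V] [Fintype C]
    [DecidableEq V] [DecidableEq C]
    (A : V → Finset C) (k : ℕ) (W : Finset C)
    (hn : 1 ≤ Fintype.card V) (hk1 : 1 ≤ k)
    (B : ℝ) (hBk : (k : ℝ) < B)
    (p : V → C → ℝ) (hp : PriceSystem A W B p) :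
    PJRplus A k W := by
  rintro ⟨c, N', ℓ, hℓ, hcW, hcard, happr, hint⟩
  have hcard_nat : ℓ * Fintype.card V ≤ N'.card * k := by
    rw [div_le_iff₀ (by exact_mod_cast hk1)] at hcard
    exact_mod_cast hcard
  have hbudget : (ℓ : ℝ) < N'.card * (B / Fintype.card V) :=
    lt_mul_div_of_mul_le_mul (by exact_mod_cast hℓ) (by exact_mod_cast hn) (Nat.cast_nonneg _)
      (by exact_mod_cast hcard_nat) hBk
  have hspent := hp.sum_sum_le_card_biUnion_inter N'
  have hleftover := hp.sum_leftover_le_one hcW happr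
  rw [sum_sub_distrib, sum_const, nsmul_eq_mul] at hleftover
  have hint' : ((N'.biUnion A ∩ W).card : ℝ) + 1 ≤ ℓ := by exact_mod_cast hint
  linarith

/-- every feasible committee that is priceable with a price system
whose budget `B` satisfies `B > k` also satisfies PJR+. -/
theorem priceable_implies_pjrplus {V C : Type*} [Fintype V] [Fintype C]
    [DecidableEq V] [DecidableEq C]
    (A : V → Finset C) (k : ℕ) (W : Finset C)
    (hn : 1 ≤ Fintype.card V) (hk1 : 1 ≤ k) (hk2 : k ≤ Fintype.card C)
    (hW : W.card ≤ k)
    (B : ℝ) (hB0 : 0 < B) (hBk : (k : ℝ) < B)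
    (p : V → C → ℝ) (hp : PriceSystem A W B p) :
    PJRplus A k W :=
  priceable_implies_pjrplus_general A k W hn hk1 B hBk p hp
end

section
/- For every approval instance, every committee W with |W| = k that maximizes the PAV score among all committees of size k satisfies EJR+. -/
open Finset

/-- The PAV score of a committee `W`: `∑_{i ∈ N} ∑_{j=1}^{|A i ∩ W|} 1/j`. -/
def pavScore {V C : Type*} [Fintype V] [DecidableEq C]
    (A : V → Finset C) (W : Finset C) : ℚ :=
  ∑ i : V, ∑ j ∈ Finset.range ((A i ∩ W).card), (1 : ℚ) / (j + 1)

/-!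
Suppose a PAV-optimal committee `W` of size `k` violated EJR+ via a candidate `c ∉ W` and a group
`N'` of at least `ℓ n / k` voters, each approving `c` and fewer than `ℓ` members of `W`. Sum the
change in PAV score over the `k` swaps `W - w + c`, `w ∈ W`, voter by voter. A voter approving `c`
and `s` members of `W` gains `1/(s+1)` in each of the `k - s` swaps removing an unapproved member,
in total `(k+1)/(s+1) - 1`, which is at least `(k+1)/ℓ - 1` for voters in `N'`. Any other voter
loses `1/s` in each of the `s` swaps removing an approved member, at most `1` in total. The sum is
therefore at least `|N'| (k+1)/ℓ - n > |N'| k/ℓ - n ≥ 0`, so some swap strictly increases the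
PAV score.
-/

theorem pavScore_eq_sum_harmonic {V C : Type*} [Fintype V] [DecidableEq C]
    (A : V → Finset C) (W : Finset C) : pavScore A W = ∑ i, harmonic #(A i ∩ W) := by
  simp [pavScore, harmonic]

section SingleVoter

variable {C : Type*} [DecidableEq C] (a W : Finset C) {c : C}

theorem sum_apply_card_inter_erase (f : ℕ → ℚ) :
    ∑ w ∈ W, f #(a ∩ W.erase w) =
      #(a ∩ W) * f (#(a ∩ W) - 1) + #(W \ a) * f #(a ∩ W) := by
  rw [← sum_filter_add_sum_filter_not W (· ∈ a), filter_mem_eq_inter, filter_notMem_eq_sdiff,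
    inter_comm W a]
  have h_mem : ∀ w ∈ a ∩ W, f #(a ∩ W.erase w) = f (#(a ∩ W) - 1) := fun w hw => by
    rw [inter_erase, card_erase_of_mem hw]
  have h_notMem : ∀ w ∈ W \ a, f #(a ∩ W.erase w) = f #(a ∩ W) := fun w hw => by
    rw [inter_erase, erase_eq_of_notMem fun h => (mem_sdiff.1 hw).2 (mem_inter.1 h).1]
  simp [sum_congr rfl h_mem, sum_congr rfl h_notMem]

theorem sum_harmonic_swap_sub_of_mem (hcW : c ∉ W) (hca : c ∈ a) :
    ∑ w ∈ W, (harmonic #(a ∩ insert c (W.erase w)) - harmonic #(a ∩ W)) =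
      (#W + 1) / (#(a ∩ W) + 1) - 1 := by
  have h_card : ∀ w, #(a ∩ insert c (W.erase w)) = #(a ∩ W.erase w) + 1 := fun w => by
    rw [inter_insert_of_mem hca,
      card_insert_of_notMem fun h => hcW (mem_of_mem_erase (mem_inter.1 h).2)]
  simp_rw [h_card]
  rw [sum_apply_card_inter_erase a W (fun t => harmonic (t + 1) - harmonic #(a ∩ W))]
  have h_split := card_sdiff_add_card_inter W a
  rw [inter_comm W a] at h_split
  rw [← h_split]
  generalize #(a ∩ W) = s
  cases s with
  | zero => simp [harmonic_succ]
  | succ s =>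
    simp only [Nat.add_sub_cancel, harmonic_succ, sub_self]
    push_cast
    field_simp
    ring

theorem neg_one_le_sum_harmonic_swap_sub_of_notMem (hca : c ∉ a) :
    -1 ≤ ∑ w ∈ W, (harmonic #(a ∩ insert c (W.erase w)) - harmonic #(a ∩ W)) := by
  simp_rw [inter_insert_of_notMem hca]
  rw [sum_apply_card_inter_erase a W (fun t => harmonic t - harmonic #(a ∩ W))]
  generalize #(a ∩ W) = s
  cases s with
  | zero => simp
  | succ s =>
    simp only [Nat.add_sub_cancel, harmonic_succ, sub_self]
    push_cast
    field_simp
    simp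

end SingleVoter

section Swap

variable {V C : Type*} [Fintype V] [DecidableEq C] (A : V → Finset C)

theorem sum_pavScore_swap_sub (W : Finset C) (c : C) :
    ∑ w ∈ W, (pavScore A (insert c (W.erase w)) - pavScore A W) =
      ∑ i, ∑ w ∈ W, (harmonic #(A i ∩ insert c (W.erase w)) - harmonic #(A i ∩ W)) := by
  simp only [pavScore_eq_sum_harmonic, ← sum_sub_distrib]
  exact sum_comm

theorem exists_pavScore_lt_swap {W : Finset C} {c : C} {N' : Finset V} {ℓ : ℕ}
    (hn : 0 < Fintype.card V) (hℓ : 0 < ℓ) (hcW : c ∉ W)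
    (hsize : (ℓ : ℚ) * Fintype.card V ≤ #N' * #W)
    (hN' : ∀ i ∈ N', c ∈ A i ∧ #(A i ∩ W) < ℓ) :
    ∃ w ∈ W, pavScore A W < pavScore A (insert c (W.erase w)) := by
  classical
  have h_voter : ∀ i, (if i ∈ N' then ((#W : ℚ) + 1) / ℓ else 0) - 1 ≤
      ∑ w ∈ W, (harmonic #(A i ∩ insert c (W.erase w)) - harmonic #(A i ∩ W)) := fun i => by
    by_cases hca : c ∈ A i
    · rw [sum_harmonic_swap_sub_of_mem _ _ hcW hca]
      split_ifs with hi
      · have hs : (#(A i ∩ W) : ℚ) + 1 ≤ ℓ := by exact_mod_cast (hN' i hi).2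
        gcongr
      · have : (0 : ℚ) ≤ (#W + 1) / (#(A i ∩ W) + 1) := by positivity
        linarith
    · have hi : i ∉ N' := fun hi => hca (hN' i hi).1
      simpa [hi] using neg_one_le_sum_harmonic_swap_sub_of_notMem (A i) W hca
  have h_total : ∑ i, ((if i ∈ N' then ((#W : ℚ) + 1) / ℓ else 0) - 1) =
      #N' * ((#W + 1) / ℓ) - Fintype.card V := by
    simp [sum_sub_distrib, sum_ite_mem]
  have h_pos : (0 : ℚ) < #N' * ((#W + 1) / ℓ) - Fintype.card V := by
    have hℓ' : (0 : ℚ) < ℓ := by exact_mod_cast hℓ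
    have hn' : (0 : ℚ) < Fintype.card V := by exact_mod_cast hn
    have hN'_pos : (0 : ℚ) < #N' := by
      by_contra! h
      nlinarith
    rw [sub_pos, mul_div_assoc', lt_div_iff₀ hℓ']
    nlinarith
  have h_sum :
      ∑ w ∈ W, (0 : ℚ) < ∑ w ∈ W, (pavScore A (insert c (W.erase w)) - pavScore A W) := by
    rw [sum_const_zero, sum_pavScore_swap_sub]
    exact h_pos.trans_le (h_total ▸ sum_le_sum fun i _ => h_voter i)
  obtain ⟨w, hw, h_gain⟩ := exists_lt_of_sum_lt h_sum
  exact ⟨w, hw, sub_pos.1 h_gain⟩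

end Swap

theorem pav_satisfies_ejrplus_general {V C : Type*} [Fintype V]
    [DecidableEq C]
    (A : V → Finset C) (k : ℕ) (W : Finset C)
    (hn : 1 ≤ Fintype.card V) (hk1 : 1 ≤ k)
    (hWcard : W.card = k)
    (hmax : ∀ W' : Finset C, W'.card = k → pavScore A W' ≤ pavScore A W) :
    EJRplus A k W := by
  rintro ⟨c, N', ℓ, hℓ, hcW, hsize, hN'⟩
  have hk : (0 : ℚ) < k := by exact_mod_cast hk1
  rw [div_le_iff₀ hk, ← hWcard] at hsize
  obtain ⟨w, hw, h_gain⟩ := exists_pavScore_lt_swap A hn hℓ hcW hsize hN'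
  have h_card : #(insert c (W.erase w)) = k := by
    rw [card_insert_of_notMem fun h => hcW (mem_of_mem_erase h), card_erase_of_mem hw, hWcard]
    omega
  exact (hmax _ h_card).not_gt h_gain

/-- every committee of size `k` maximizing the PAV score among all
committees of size `k` satisfies EJR+. -/
theorem pav_satisfies_ejrplus {V C : Type*} [Fintype V] [Fintype C]
    [DecidableEq V] [DecidableEq C]
    (A : V → Finset C) (k : ℕ) (W : Finset C)
    (hn : 1 ≤ Fintype.card V) (hk1 : 1 ≤ k) (hk2 : k ≤ Fintype.card C)
    (hWcard : W.card = k)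
    (hmax : ∀ W' : Finset C, W'.card = k → pavScore A W' ≤ pavScore A W) :
    EJRplus A k W :=
  pav_satisfies_ejrplus_general A k W hn hk1 hWcard hmax
end

section
/- Consider the instance with strict preferences over 4 voters, candidates C = {c1,...,c6}, and committee size k = 2, in which voter 1 ranks c1 ≻ c2 ≻ c3 ≻ c4 ≻ c5 ≻ c6, voter 2 ranks c5 ≻ c2 ≻ c3 ≻ c4 ≻ c6 ≻ c1, voter 3 ranks c4 ≻ c3 ≻ c2 ≻ c6 ≻ c1 ≻ c5, and voter 4 ranks c6 ≻ c3 ≻ c2 ≻ c5 ≻ c1 ≻ c4. Then the committee W = {c4, c6} satisfies IPSC but does not satisfy rank-PJR+. -/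
/-!
No two voters of the instance agree on a nonempty proper initial segment of their rankings, so every
generalized solid coalition of two or more voters is over `∅` or over all candidates; since
`n / k = 2`, every coalition relevant to IPSC has at least two voters and `ℓ ≤ 2 = |W|`, while the
upper contour of the full candidate set contains `W`. Rank-PJR+ fails for voters 1 and 2, who both rank `c2` second while
their top two choices `{c1, c2, c5}` miss `W`.
-/

/-- `N'` forms a generalized solid coalition over `C'`. -/
def SolidCoalition {V C : Type*} (rank : V → C → ℕ∞)
    (N' : Finset V) (C' : Finset C) : Prop :=
  ∀ i ∈ N', ∀ c' ∈ C', ∀ c : C, c ∉ C' → rank i c' ≤ rank i c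

/-- The upper contour set `C̄'(N')`. -/
def upperContour {V C : Type*} [Fintype C] [DecidableEq C] (rank : V → C → ℕ∞)
    (N' : Finset V) (C' : Finset C) : Finset C :=
  Finset.univ.filter fun c => ∃ i ∈ N', ∃ c' ∈ C', rank i c ≤ rank i c'

/-- A committee `W` satisfies IPSC. -/
def IPSC {V C : Type*} [Fintype V] [Fintype C] [DecidableEq C]
    (rank : V → C → ℕ∞) (k : ℕ) (W : Finset C) : Prop :=
  ∀ ℓ : ℕ, 1 ≤ ℓ → ∀ (N' : Finset V) (C' : Finset C),
    SolidCoalition rank N' C' → (ℓ : ℚ) * (Fintype.card V) / k ≤ N'.card →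
    C' ⊆ W ∨ ℓ ≤ (upperContour rank N' C' ∩ W).card

/-- A committee `W` satisfies rank-PJR+. -/
def RankPJRplus {V C : Type*} [Fintype V] [Fintype C] [DecidableEq V] [DecidableEq C]
    (rank : V → C → ℕ∞) (k : ℕ) (W : Finset C) : Prop :=
  ¬ ∃ (c : C) (r ℓ : ℕ) (N' : Finset V), c ∉ W ∧
      1 ≤ r ∧ r ≤ Fintype.card C ∧ 1 ≤ ℓ ∧
      (ℓ : ℚ) * (Fintype.card V) / k ≤ N'.card ∧
      (∀ i ∈ N', rank i c ≤ (r : ℕ∞)) ∧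
      ((N'.biUnion fun i => Finset.univ.filter fun c' : C => rank i c' ≤ (r : ℕ∞))
          ∩ W).card < ℓ

section SolidCoalition

variable {V C : Type*} {rank : V → C → ℕ∞}

theorem SolidCoalition.mono {N₁ N₂ : Finset V} {C' : Finset C}
    (h : SolidCoalition rank N₂ C') (hN : N₁ ⊆ N₂) : SolidCoalition rank N₁ C' :=
  fun i hi => h i (hN hi)

theorem subset_upperContour [Fintype C] [DecidableEq C] {N' : Finset V} {C' : Finset C}
    (hN : N'.Nonempty) : C' ⊆ upperContour rank N' C' := by
  obtain ⟨i, hi⟩ := hN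
  intro c hc
  simpa [upperContour] using ⟨i, hi, c, hc, le_rfl⟩

theorem ipsc_of_solidCoalition_pair_trivial [Fintype V] [Fintype C] [DecidableEq V]
    [DecidableEq C] {k : ℕ} {W : Finset C}
    (hpair : ∀ i j : V, i ≠ j → ∀ C' : Finset C,
      SolidCoalition rank {i, j} C' → C' = ∅ ∨ C' = Finset.univ)
    (hk : 0 < k) (hkV : k < Fintype.card V) (hW : k ≤ W.card) : IPSC rank k W := by
  intro ℓ hℓ N' C' hsolid hsize
  have hsize' : ℓ * Fintype.card V ≤ N'.card * k := by
    rw [div_le_iff₀ (by exact_mod_cast hk)] at hsize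
    exact_mod_cast hsize
  have hN' : N'.card ≤ Fintype.card V := Finset.card_le_univ N'
  have htwo : 1 < N'.card := by nlinarith
  obtain ⟨i, hi, j, hj, hij⟩ := Finset.one_lt_card.mp htwo
  have hpair_sub : {i, j} ⊆ N' := Finset.insert_subset hi (Finset.singleton_subset_iff.mpr hj)
  rcases hpair i j hij C' (hsolid.mono hpair_sub) with rfl | rfl
  · exact Or.inl (Finset.empty_subset W)
  · right
    have hℓk : ℓ ≤ k := by nlinarith
    rw [Finset.inter_eq_right.mpr (W.subset_univ.trans (subset_upperContour ⟨i, hi⟩))]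
    omega

end SolidCoalition

/-- Row `i` holds the ranks given by voter `i + 1`; candidate `cⱼ` is `j - 1 : Fin 6`. -/
def exampleRank : Fin 4 → Fin 6 → ℕ∞ := fun i c =>
  ((![![1, 2, 3, 4, 5, 6],
      ![6, 2, 3, 4, 1, 5],
      ![5, 3, 2, 1, 6, 4],
      ![5, 3, 2, 6, 4, 1]] : Fin 4 → Fin 6 → ℕ) i c : ℕ∞)

theorem exampleRank_solidCoalition_pair_trivial (i j : Fin 4) (hij : i ≠ j) (C' : Finset (Fin 6))
    (h : SolidCoalition exampleRank {i, j} C') : C' = ∅ ∨ C' = Finset.univ := by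
  revert i j C'
  unfold SolidCoalition exampleRank
  decide

theorem ipsc_exampleRank : IPSC exampleRank 2 {3, 5} :=
  ipsc_of_solidCoalition_pair_trivial exampleRank_solidCoalition_pair_trivial (by norm_num)
    (by simp) (by decide)

theorem not_rankPJRplus_exampleRank : ¬ RankPJRplus exampleRank 2 {3, 5} := by
  rw [RankPJRplus, not_not]
  refine ⟨1, 2, 1, {0, 1}, by decide, by decide, by decide, le_rfl, by norm_num, ?_, ?_⟩ <;>
    unfold exampleRank <;> decide

/-- in the 4-voter, 6-candidate instance with strict rankings
`c1 ≻ c2 ≻ c3 ≻ c4 ≻ c5 ≻ c6`, `c5 ≻ c2 ≻ c3 ≻ c4 ≻ c6 ≻ c1`,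
`c4 ≻ c3 ≻ c2 ≻ c6 ≻ c1 ≻ c5`, `c6 ≻ c3 ≻ c2 ≻ c5 ≻ c1 ≻ c4` and `k = 2`,
the committee `W = {c4, c6}` satisfies IPSC but not rank-PJR+.
(Candidate `cⱼ` is encoded as `j - 1 : Fin 6`.) -/
theorem ipsc_not_rankpjrplus_example :
    let rank : Fin 4 → Fin 6 → ℕ∞ := fun i c =>
      ((![![1, 2, 3, 4, 5, 6],
          ![6, 2, 3, 4, 1, 5],
          ![5, 3, 2, 1, 6, 4],
          ![5, 3, 2, 6, 4, 1]] : Fin 4 → Fin 6 → ℕ) i c : ℕ∞)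
    let W : Finset (Fin 6) := {3, 5}
    IPSC rank 2 W ∧ ¬ RankPJRplus rank 2 W :=
  ⟨ipsc_exampleRank, not_rankPJRplus_exampleRank⟩
end

section
/- For every instance with weak preferences, every feasible committee that is rank-priceable with a price system whose budget B satisfies B > k also satisfies rank-PJR+. -/
open Finset

/-- The rank functions are consistent with the acceptable sets. -/
def ValidRanks {V C : Type*} [Fintype C] [DecidableEq C]
    (A : V → Finset C) (rank : V → C → ℕ∞) : Prop :=
  (∀ i c, rank i c = ⊤ ↔ c ∉ A i) ∧
  (∀ i, ∀ c ∈ A i, rank i c =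
    ((Finset.univ.filter fun c' : C => rank i c' < rank i c).card : ℕ∞) + 1)

/-- A rank price system for `W` with budget `B`: payment functions
`p i : C → [0, B/n]` satisfying (C1)–(C4) and (C5_rank). -/
def RankPriceSystem {V C : Type*} [Fintype V] [Fintype C] [DecidableEq V] [DecidableEq C]
    (A : V → Finset C) (rank : V → C → ℕ∞) (W : Finset C)
    (B : ℝ) (p : V → C → ℝ) : Prop :=
  (∀ i c, 0 ≤ p i c ∧ p i c ≤ B / (Fintype.card V)) ∧
  -- (C1)
  (∀ i c, c ∉ A i → p i c = 0) ∧
  -- (C2)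
  (∀ i : V, ∑ c : C, p i c ≤ B / (Fintype.card V)) ∧
  -- (C3)
  (∀ c ∈ W, ∑ i : V, p i c = 1) ∧
  -- (C4)
  (∀ c ∉ W, ∑ i : V, p i c = 0) ∧
  -- (C5_rank)
  (∀ c ∉ W, ∀ r : ℕ, 1 ≤ r → r ≤ Fintype.card C →
    (∑ i ∈ Finset.univ.filter (fun i : V => rank i c ≤ (r : ℕ∞)),
        (B / (Fintype.card V) - ∑ c' : C, p i c')) +
    (∑ i ∈ Finset.univ.filter (fun i : V => rank i c ≤ (r : ℕ∞)),
        ∑ c' ∈ Finset.univ.filter (fun c' : C => ¬ rank i c' ≤ (r : ℕ∞)), p i c') ≤ 1)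

/-
Suppose `c`, `r`, `ℓ`, `N'` witness a violation of rank-PJR+. Within their top `r` ranks the
voters of `N'` can pay only for the fewer than `ℓ` members of `W` ranked there by one of them,
each of which costs `1`, so they spend at most `ℓ - 1` there. Their remaining money (unspent, or
spent outside the top `r`) is therefore at least `|N'|·B/n - (ℓ - 1) > ℓ - (ℓ - 1) = 1`, since
`|N'| ≥ ℓn/k` and `B > k`; but (C5_rank) bounds it by `1`.
-/

namespace RankPriceSystem

variable {V C : Type*} [Fintype V] [Fintype C] [DecidableEq V] [DecidableEq C]
  {A : V → Finset C} {rank : V → C → ℕ∞} {W : Finset C} {B : ℝ} {p : V → C → ℝ}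

lemma nonneg (hp : RankPriceSystem A rank W B p) (i : V) (c : C) : 0 ≤ p i c :=
  (hp.1 i c).1

lemma sum_le_budget_share (hp : RankPriceSystem A rank W B p) (i : V) (S : Finset C) :
    ∑ c ∈ S, p i c ≤ B / Fintype.card V :=
  (sum_le_sum_of_subset_of_nonneg (subset_univ S) fun c _ _ => hp.nonneg i c).trans (hp.2.2.1 i)

lemma sum_sum_le_card_inter (hp : RankPriceSystem A rank W B p) (N' : Finset V)
    (S : Finset C) : ∑ i ∈ N', ∑ c ∈ S, p i c ≤ #(S ∩ W) :=
  calc ∑ i ∈ N', ∑ c ∈ S, p i c = ∑ c ∈ S, ∑ i ∈ N', p i c := sum_comm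
    _ ≤ ∑ c ∈ S, ∑ i, p i c :=
      sum_le_sum fun c _ =>
        sum_le_sum_of_subset_of_nonneg (subset_univ N') fun i _ _ => hp.nonneg i c
    _ = ∑ c ∈ S, if c ∈ W then (1 : ℝ) else 0 :=
      sum_congr rfl fun c _ => by
        split_ifs with hc
        exacts [hp.2.2.2.1 c hc, hp.2.2.2.2.1 c hc]
    _ = #(S ∩ W) := by rw [sum_boole, filter_mem_eq_inter]

lemma sum_sum_top_le_card_biUnion_inter (hp : RankPriceSystem A rank W B p) (N' : Finset V)
    (r : ℕ) :
    ∑ i ∈ N', ∑ c ∈ univ.filter (fun c => rank i c ≤ (r : ℕ∞)), p i c ≤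
      #((N'.biUnion fun i => univ.filter fun c => rank i c ≤ (r : ℕ∞)) ∩ W) :=
  (sum_le_sum fun i hi =>
    sum_le_sum_of_subset_of_nonneg
      (subset_biUnion_of_mem (fun i => univ.filter fun c => rank i c ≤ (r : ℕ∞)) hi)
      fun c _ _ => hp.nonneg i c).trans (hp.sum_sum_le_card_inter N' _)

/-- (C5_rank), after cancelling the spending outside the top `r` ranks against the total
spending. -/
lemma sum_sub_sum_top_le_one (hp : RankPriceSystem A rank W B p) {c : C} (hc : c ∉ W)
    {r : ℕ} (hr1 : 1 ≤ r) (hr2 : r ≤ Fintype.card C) :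
    ∑ i ∈ univ.filter (fun i => rank i c ≤ (r : ℕ∞)),
      (B / Fintype.card V - ∑ c' ∈ univ.filter (fun c' => rank i c' ≤ (r : ℕ∞)), p i c') ≤ 1 := by
  have hC5 := hp.2.2.2.2.2 c hc r hr1 hr2
  rw [← sum_add_distrib] at hC5
  refine le_of_eq_of_le (sum_congr rfl fun i _ => ?_) hC5
  rw [← sum_filter_add_sum_filter_not univ (fun c' => rank i c' ≤ (r : ℕ∞))]
  ring

lemma card_mul_sub_sum_top_le_one (hp : RankPriceSystem A rank W B p) {c : C} (hc : c ∉ W)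
    {r : ℕ} (hr1 : 1 ≤ r) (hr2 : r ≤ Fintype.card C) {N' : Finset V}
    (hN' : ∀ i ∈ N', rank i c ≤ (r : ℕ∞)) :
    #N' * (B / Fintype.card V) -
      ∑ i ∈ N', ∑ c' ∈ univ.filter (fun c' => rank i c' ≤ (r : ℕ∞)), p i c' ≤ 1 := by
  rw [← nsmul_eq_mul, ← sum_const, ← sum_sub_distrib]
  refine le_trans (sum_le_sum_of_subset_of_nonneg ?_ fun i _ _ => ?_)
    (hp.sum_sub_sum_top_le_one hc hr1 hr2)
  · exact fun i hi => mem_filter.2 ⟨mem_univ i, hN' i hi⟩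
  · exact sub_nonneg.2 (hp.sum_le_budget_share i _)

end RankPriceSystem

lemma lt_card_mul_div_of_mul_div_le {n k ℓ m : ℕ} {B : ℝ} (hn : 0 < n) (hk : 0 < k)
    (hℓ : 1 ≤ ℓ) (hBk : (k : ℝ) < B) (hm : (ℓ : ℝ) * n / k ≤ m) :
    (ℓ : ℝ) < m * (B / n) := by
  have hn' : (0 : ℝ) < n := by exact_mod_cast hn
  have hk' : (0 : ℝ) < k := by exact_mod_cast hk
  have hB : 0 < B := hk'.trans hBk
  calc (ℓ : ℝ) = ℓ * n / k * (k / n) := by field_simp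
    _ < ℓ * n / k * (B / n) := by gcongr
    _ ≤ m * (B / n) := mul_le_mul_of_nonneg_right hm (div_pos hB hn').le

theorem rank_priceable_implies_rankpjrplus_general {V C : Type*} [Fintype V] [Fintype C]
    [DecidableEq V] [DecidableEq C]
    (A : V → Finset C) (rank : V → C → ℕ∞) (k : ℕ) (W : Finset C)
    (hn : 1 ≤ Fintype.card V) (hk1 : 1 ≤ k)
    (B : ℝ) (hBk : (k : ℝ) < B)
    (p : V → C → ℝ) (hp : RankPriceSystem A rank W B p) :
    RankPJRplus rank k W := by
  rintro ⟨c, r, ℓ, N', hcW, hr1, hr2, hℓ, hN'card, hN'rank, hcovered⟩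
  have hunspent := hp.card_mul_sub_sum_top_le_one hcW hr1 hr2 hN'rank
  have hspent := hp.sum_sum_top_le_card_biUnion_inter N' r
  have hshare := lt_card_mul_div_of_mul_div_le hn hk1 hℓ hBk <| by
    simpa using (Rat.cast_le (K := ℝ)).2 hN'card
  have hcovered' : (#((N'.biUnion fun i => univ.filter fun c' => rank i c' ≤ (r : ℕ∞)) ∩ W)
      : ℝ) + 1 ≤ ℓ := by exact_mod_cast hcovered
  linarith

/-- every feasible committee that is rank-priceable with a price
system whose budget `B` satisfies `B > k` also satisfies rank-PJR+. -/
theorem rank_priceable_implies_rankpjrplus {V C : Type*} [Fintype V] [Fintype C]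
    [DecidableEq V] [DecidableEq C]
    (A : V → Finset C) (rank : V → C → ℕ∞) (k : ℕ) (W : Finset C)
    (hvalid : ValidRanks A rank)
    (hn : 1 ≤ Fintype.card V) (hk1 : 1 ≤ k) (hk2 : k ≤ Fintype.card C)
    (hW : W.card ≤ k)
    (B : ℝ) (hB0 : 0 < B) (hBk : (k : ℝ) < B)
    (p : V → C → ℝ) (hp : RankPriceSystem A rank W B p) :
    RankPJRplus rank k W :=
  rank_priceable_implies_rankpjrplus_general A rank k W hn hk1 B hBk p hp
end

section
/- For every instance with weak preferences, there exists a feasible committee W (|W| ≤ k) that is rank-priceable with some budget B > k; consequently, a committee satisfying rank-PJR+ always exists. -/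
open Finset

/-!
Prices are produced by a greedy procedure in the spirit of the Method of Equal Shares. Every
voter starts with the budget `b = B / n`. For `r = 0, 1, …, |C|` in turn: while some unelected
candidate `c` is supported at rank `≤ r` by voters whose leftover money exceeds `1`, elect `c`
and let each such voter pay for it in proportion to her leftover money. At stage `r` nobody has
paid for a candidate she ranks below `r`, so the left side of (C5_rank) is just the leftover
money of `N_c^r`, which is at most `1` when the stage ends; later purchases only lower it.

With `B = k + 1/2` the voters spend at most `B < k + 1`, so at most `k` candidates are elected.
A group `N'` witnessing a violation of rank-PJR+ for `(c, r, ℓ)` would keep more than `ℓ` units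
of money that (C5_rank) forces it to spend, except for `1`, on its fewer than `ℓ` elected
candidates, each of which costs `1`.
-/

section Greedy

variable {V C : Type*} [Fintype V] [Fintype C]

/-- The money that the voters ranking `c` at most `r` do not spend on candidates they rank at
most `r`: the left side of (C5_rank). -/
def rankSlack (rank : V → C → ℕ∞) (b : ℝ) (p : V → C → ℝ) (c : C) (r : ℕ) : ℝ :=
  ∑ i ∈ univ.filter (fun i => rank i c ≤ r),
    (b - ∑ c' ∈ univ.filter (fun c' => rank i c' ≤ r), p i c')

theorem sum_sub_add_sum_eq_rankSlack (rank : V → C → ℕ∞) (b : ℝ) (p : V → C → ℝ) (c : C)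
    (r : ℕ) :
    (∑ i ∈ univ.filter (fun i => rank i c ≤ r), (b - ∑ c', p i c')) +
      (∑ i ∈ univ.filter (fun i => rank i c ≤ r),
        ∑ c' ∈ univ.filter (fun c' => ¬ rank i c' ≤ r), p i c') = rankSlack rank b p c r := by
  rw [rankSlack, ← sum_add_distrib]
  refine sum_congr rfl fun i _ => ?_
  linarith [sum_filter_add_sum_filter_not univ (fun c' => rank i c' ≤ r) (p i)]

theorem rankSlack_anti {rank : V → C → ℕ∞} {b : ℝ} {p q : V → C → ℝ} (hpq : ∀ i c, p i c ≤ q i c)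
    (c : C) (r : ℕ) : rankSlack rank b q c r ≤ rankSlack rank b p c r := by
  unfold rankSlack
  gcongr with i _ c' _
  exact hpq i c'

theorem rankSlack_eq_sum_sub {rank : V → C → ℕ∞} {b : ℝ} {p : V → C → ℝ} {r : ℕ}
    (hp : ∀ i c, p i c ≠ 0 → rank i c ≤ r) (c : C) :
    rankSlack rank b p c r = ∑ i ∈ univ.filter (fun i => rank i c ≤ r), (b - ∑ c', p i c') :=
  sum_congr rfl fun i _ => by rw [sum_filter_of_ne fun c' _ => hp i c']

/-- The invariant of the greedy procedure with per-voter budget `b` during stage `r`. -/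
structure PartialRankPriceSystem (rank : V → C → ℕ∞) (b : ℝ) (r : ℕ) (W : Finset C)
    (p : V → C → ℝ) : Prop where
  nonneg : ∀ i c, 0 ≤ p i c
  rank_le : ∀ i c, p i c ≠ 0 → rank i c ≤ r
  sum_le : ∀ i, ∑ c, p i c ≤ b
  sum_eq_one : ∀ c ∈ W, ∑ i, p i c = 1
  eq_zero : ∀ c ∉ W, ∀ i, p i c = 0
  rankSlack_le : ∀ r' < r, ∀ c ∉ W, rankSlack rank b p c r' ≤ 1

namespace PartialRankPriceSystem

variable {rank : V → C → ℕ∞} {b : ℝ} {r : ℕ} {W : Finset C} {p : V → C → ℝ}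

theorem empty (hb : 0 ≤ b) : PartialRankPriceSystem rank b 0 ∅ 0 where
  nonneg _ _ := le_rfl
  rank_le _ _ h := absurd rfl h
  sum_le _ := by simpa using hb
  sum_eq_one _ h := absurd h (notMem_empty _)
  eq_zero _ _ _ := rfl
  rankSlack_le _ h := absurd h (Nat.not_lt_zero _)

theorem exists_insert [DecidableEq C] (h : PartialRankPriceSystem rank b r W p) {c₀ : C}
    (hc₀ : c₀ ∉ W) (hslack : 1 < rankSlack rank b p c₀ r) :
    ∃ q, PartialRankPriceSystem rank b r (insert c₀ W) q := by
  set L := rankSlack rank b p c₀ r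
  set share : V → ℝ := fun i => if rank i c₀ ≤ r then (b - ∑ c, p i c) / L else 0
  have share_nonneg i : 0 ≤ share i := by
    have := h.sum_le i
    unfold share; split_ifs <;> positivity
  have share_le i : share i ≤ b - ∑ c, p i c := by
    have := h.sum_le i
    unfold share; split_ifs
    · exact div_le_self (by linarith) hslack.le
    · linarith
  have sum_share : ∑ i, share i = 1 := by
    rw [← sum_filter, ← sum_div, ← rankSlack_eq_sum_sub h.rank_le, div_self (by positivity)]
  set q : V → C → ℝ := fun i c => p i c + if c = c₀ then share i else 0
  have hpq i c : p i c ≤ q i c := le_add_of_nonneg_right (by split_ifs <;> simp [share_nonneg])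
  have q_of_ne {c} (hc : c ≠ c₀) i : q i c = p i c := by simp [q, hc]
  refine ⟨q, fun i c => (h.nonneg i c).trans (hpq i c), fun i c hq => ?_, fun i => ?_,
    fun c hc => ?_, fun c hc i => ?_, fun r' hr' c hc => ?_⟩
  · by_cases hc : c = c₀
    · subst hc
      by_contra hr
      simp [q, share, hr, h.eq_zero c hc₀] at hq
    · exact h.rank_le i c (by rwa [← q_of_ne hc])
  · have : ∑ c, q i c = ∑ c, p i c + share i := by simp [q, sum_add_distrib]
    linarith [share_le i]
  · rcases mem_insert.mp hc with rfl | hc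
    · simp [q, h.eq_zero c hc₀, sum_share]
    · rw [sum_congr rfl fun i _ => q_of_ne (ne_of_mem_of_not_mem hc hc₀) i, h.sum_eq_one c hc]
  · rw [mem_insert, not_or] at hc
    rw [q_of_ne hc.1 i]
    exact h.eq_zero c hc.2 i
  · exact (rankSlack_anti hpq c r').trans
      (h.rankSlack_le r' hr' c fun hW => hc (mem_insert_of_mem hW))

theorem exists_saturated [DecidableEq C] {W : Finset C} {p : V → C → ℝ}
    (h : PartialRankPriceSystem rank b r W p) :
    ∃ W' p', PartialRankPriceSystem rank b r W' p' ∧ ∀ c ∉ W', rankSlack rank b p' c r ≤ 1 := by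
  by_cases hex : ∃ c ∉ W, 1 < rankSlack rank b p c r
  · obtain ⟨c, hc, hslack⟩ := hex
    obtain ⟨q, hq⟩ := h.exists_insert hc hslack
    exact hq.exists_saturated
  · push Not at hex
    exact ⟨W, p, h, hex⟩
termination_by Wᶜ.card
decreasing_by
  exact card_lt_card (by rw [compl_insert]; exact erase_ssubset (mem_compl.mpr hc))

theorem succ (h : PartialRankPriceSystem rank b r W p)
    (hsat : ∀ c ∉ W, rankSlack rank b p c r ≤ 1) : PartialRankPriceSystem rank b (r + 1) W p where
  __ := h
  rank_le i c hp := (h.rank_le i c hp).trans (by exact_mod_cast r.le_succ)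
  rankSlack_le r' hr' c hc := by
    rcases Nat.lt_succ_iff_lt_or_eq.mp hr' with hr' | rfl
    exacts [h.rankSlack_le r' hr' c hc, hsat c hc]

end PartialRankPriceSystem

theorem exists_partialRankPriceSystem [DecidableEq C] (rank : V → C → ℕ∞) {b : ℝ} (hb : 0 ≤ b)
    (r : ℕ) :
    ∃ W p, PartialRankPriceSystem rank b r W p := by
  induction r with
  | zero => exact ⟨∅, 0, .empty hb⟩
  | succ r ih =>
    obtain ⟨W, p, h⟩ := ih
    obtain ⟨W', p', h', hsat⟩ := h.exists_saturated
    exact ⟨W', p', h'.succ hsat⟩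

theorem PartialRankPriceSystem.rankPriceSystem [DecidableEq V] [DecidableEq C]
    {A : V → Finset C} {rank : V → C → ℕ∞} {W : Finset C} {B : ℝ} {p : V → C → ℝ} {r : ℕ}
    (h : PartialRankPriceSystem rank (B / Fintype.card V) r W p)
    (hA : ∀ i c, c ∉ A i → rank i c = ⊤) (hr : Fintype.card C < r) :
    RankPriceSystem A rank W B p := by
  refine ⟨fun i c => ⟨h.nonneg i c, ?_⟩, fun i c hc => ?_, h.sum_le, h.sum_eq_one,
    fun c hc => sum_eq_zero fun i _ => h.eq_zero c hc i, fun c hc r' _ hr' => ?_⟩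
  · exact (single_le_sum (fun c' _ => h.nonneg i c') (mem_univ c)).trans (h.sum_le i)
  · by_contra hne
    have := h.rank_le i c hne
    simp [hA i c hc] at this
  · rw [sum_sub_add_sum_eq_rankSlack]
    exact h.rankSlack_le r' (by omega) c hc

end Greedy

namespace RankPriceSystem

variable {V C : Type*} [Fintype V] [Fintype C] [DecidableEq V] [DecidableEq C]
  {A : V → Finset C} {rank : V → C → ℕ∞} {W : Finset C} {B : ℝ} {p : V → C → ℝ}

theorem eq_zero_of_notMem (hp : RankPriceSystem A rank W B p) {c : C} (hc : c ∉ W) (i : V) :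
    p i c = 0 := by
  obtain ⟨hnonneg, -, -, -, hout, -⟩ := hp
  exact (sum_eq_zero_iff_of_nonneg fun i _ => (hnonneg i c).1).mp (hout c hc) i (mem_univ i)

theorem sum_inter_eq_sum (hp : RankPriceSystem A rank W B p) (i : V) (s : Finset C) :
    ∑ c ∈ s ∩ W, p i c = ∑ c ∈ s, p i c :=
  sum_subset inter_subset_left fun _ hc hcW =>
    hp.eq_zero_of_notMem (fun hW => hcW (mem_inter.mpr ⟨hc, hW⟩)) i

theorem sum_sum_le_card (hp : RankPriceSystem A rank W B p) (N : Finset V) (S : Finset C)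
    (hS : S ⊆ W) : ∑ i ∈ N, ∑ c ∈ S, p i c ≤ S.card := by
  obtain ⟨hnonneg, -, -, hin, -, -⟩ := hp
  rw [sum_comm, card_eq_sum_ones, Nat.cast_sum, Nat.cast_one]
  refine sum_le_sum fun c hc => ?_
  calc ∑ i ∈ N, p i c ≤ ∑ i, p i c :=
        sum_le_sum_of_subset_of_nonneg (subset_univ N) fun i _ _ => (hnonneg i c).1
    _ = 1 := hin c (hS hc)

theorem card_le [Nonempty V] (hp : RankPriceSystem A rank W B p) : (W.card : ℝ) ≤ B := by
  obtain ⟨-, -, hbudget, hin, -, -⟩ := id hp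
  calc (W.card : ℝ) = ∑ c ∈ W, ∑ i, p i c := by simp [sum_congr rfl hin]
    _ = ∑ i, ∑ c, p i c := by
        rw [sum_comm]
        exact sum_congr rfl fun i _ => by rw [← hp.sum_inter_eq_sum i univ, univ_inter]
    _ ≤ ∑ _i : V, B / Fintype.card V := sum_le_sum fun i _ => hbudget i
    _ = B := by simp [mul_div_cancel₀]

/-- By (C5_rank), the voters of `N' ⊆ N_c^r` spend all but `1` of their money on the candidates
of `W` that one of them ranks at most `r`, which cost `1` each. -/
theorem card_mul_le (hp : RankPriceSystem A rank W B p) {c : C} (hc : c ∉ W) {r : ℕ}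
    (hr₁ : 1 ≤ r) (hr₂ : r ≤ Fintype.card C) {N' : Finset V} (hN' : ∀ i ∈ N', rank i c ≤ r) :
    N'.card * (B / Fintype.card V) ≤
      ((N'.biUnion fun i => univ.filter fun c' => rank i c' ≤ r) ∩ W).card + 1 := by
  obtain ⟨hnonneg, -, hbudget, -, -, hC5⟩ := id hp
  set top : V → Finset C := fun i => univ.filter fun c' => rank i c' ≤ r
  set S := (N'.biUnion top) ∩ W
  have hslack : ∑ i ∈ N', (B / Fintype.card V - ∑ c' ∈ top i, p i c') ≤ 1 := by
    have hC5cr := hC5 c hc r hr₁ hr₂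
    rw [sum_sub_add_sum_eq_rankSlack] at hC5cr
    refine le_trans (sum_le_sum_of_subset_of_nonneg (fun i hi => ?_) fun i _ _ => ?_) hC5cr
    · exact mem_filter.mpr ⟨mem_univ i, hN' i hi⟩
    · exact sub_nonneg.mpr <| (sum_le_sum_of_subset_of_nonneg (subset_univ _)
        fun c' _ _ => (hnonneg i c').1).trans (hbudget i)
  have hspent : ∑ i ∈ N', ∑ c' ∈ top i, p i c' ≤ S.card := by
    refine le_trans (sum_le_sum fun i hi => ?_) (hp.sum_sum_le_card N' S inter_subset_right)
    rw [← hp.sum_inter_eq_sum]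
    exact sum_le_sum_of_subset_of_nonneg (inter_subset_inter_right (subset_biUnion_of_mem top hi))
      fun c' _ _ => (hnonneg i c').1
  rw [sum_sub_distrib, sum_const, nsmul_eq_mul] at hslack
  linarith

theorem rankPJRplus [Nonempty V] (hp : RankPriceSystem A rank W B p) {k : ℕ} (hk : 0 < k)
    (hB : k < B) : RankPJRplus rank k W := by
  rintro ⟨c, r, ℓ, N', hc, hr₁, hr₂, hℓ, hN'card, hN', hcover⟩
  have hn : (0 : ℝ) < Fintype.card V := by exact_mod_cast Fintype.card_pos
  replace hN'card : ℓ * Fintype.card V / k ≤ (N'.card : ℝ) := by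
    simpa using (Rat.cast_le (K := ℝ)).mpr hN'card
  replace hcover := (Nat.cast_le (α := ℝ)).mpr hcover
  have hspent := hp.card_mul_le hc hr₁ hr₂ hN'
  push_cast at hcover
  have hmoney : ℓ * B / k ≤ N'.card * (B / Fintype.card V) := by
    calc (ℓ * B / k : ℝ) = ℓ * Fintype.card V / k * (B / Fintype.card V) := by field_simp
      _ ≤ _ := by
        have : 0 ≤ B / Fintype.card V := div_nonneg (by linarith [k.cast_nonneg (α := ℝ)]) hn.le
        gcongr
  have hgain : (ℓ : ℝ) < ℓ * B / k := by
    rw [lt_div_iff₀ (by exact_mod_cast hk)]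
    gcongr
  linarith

end RankPriceSystem

theorem exists_rank_priceable_committee_general {V C : Type*} [Fintype V] [Fintype C]
    [DecidableEq V] [DecidableEq C]
    (A : V → Finset C) (rank : V → C → ℕ∞)
    (hvalid : ValidRanks A rank) (k : ℕ)
    (hn : 1 ≤ Fintype.card V) (hk1 : 1 ≤ k) :
    ∃ W : Finset C, W.card ≤ k ∧
      (∃ (B : ℝ) (p : V → C → ℝ), (k : ℝ) < B ∧ RankPriceSystem A rank W B p) ∧
      RankPJRplus rank k W := by
  have : Nonempty V := Fintype.card_pos_iff.mp hn
  set B : ℝ := k + 1 / 2 with hB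
  obtain ⟨W, p, h⟩ := exists_partialRankPriceSystem rank (b := B / Fintype.card V)
    (by positivity) (Fintype.card C + 1)
  have hp : RankPriceSystem A rank W B p :=
    h.rankPriceSystem (fun i c => (hvalid.1 i c).mpr) (Nat.lt_succ_self _)
  have hW : (W.card : ℝ) < k + 1 := by linarith [hp.card_le]
  exact ⟨W, Nat.lt_succ_iff.mp (by exact_mod_cast hW), ⟨B, p, by linarith, hp⟩,
    hp.rankPJRplus (by omega) (by linarith)⟩

/-- for every instance with weak preferences there exists a
feasible committee that is rank-priceable with some budget `B > k`, and hence a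
committee satisfying rank-PJR+ always exists. -/
theorem exists_rank_priceable_committee {V C : Type*} [Fintype V] [Fintype C]
    [DecidableEq V] [DecidableEq C]
    (A : V → Finset C) (rank : V → C → ℕ∞)
    (hvalid : ValidRanks A rank) (k : ℕ)
    (hn : 1 ≤ Fintype.card V) (hk1 : 1 ≤ k) (hk2 : k ≤ Fintype.card C) :
    ∃ W : Finset C, W.card ≤ k ∧
      (∃ (B : ℝ) (p : V → C → ℝ), (k : ℝ) < B ∧ RankPriceSystem A rank W B p) ∧
      RankPJRplus rank k W :=
  exists_rank_priceable_committee_general A rank hvalid k hn hk1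
end

section
/- Consider the instance with 2 voters, candidates C = {c1, c2, c3, c4}, and committee size k = 2, in which voter 1 ranks c1 ≻ c2 ≻ c3 ≻ c4 and voter 2 ranks c4 ≻ c2 ≻ c3 ≻ c1. Then no feasible committee (of size at most 2) satisfies rank-EJR+. -/
/-
If each voter alone is entitled to a seat (`n ≤ k`), rank-EJR+ applied with `r = ℓ = 1` forces
every voter's top choice into the committee; here that forces `W = {c1, c4}` (candidate `cⱼ`
is `j - 1 : Fin 4`). But then both voters rank the unelected `c2` within their top two, while
each has only one committee member there, and together they are entitled to two seats.
-/

/-- A committee `W` satisfies rank-EJR+: there is no candidate `c ∉ W`, rank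
`r ∈ {1,…,|C|}`, `ℓ ≥ 1`, and group `N'` with `|N'| ≥ ℓ·n/k` such that
`rank i c ≤ r` and `|A_i^r ∩ W| < ℓ` for all `i ∈ N'`. -/
def RankEJRplus {V C : Type*} [Fintype V] [Fintype C] [DecidableEq C]
    (rank : V → C → ℕ∞) (k : ℕ) (W : Finset C) : Prop :=
  ¬ ∃ (c : C) (r ℓ : ℕ) (N' : Finset V), c ∉ W ∧
      1 ≤ r ∧ r ≤ Fintype.card C ∧ 1 ≤ ℓ ∧
      (ℓ : ℚ) * (Fintype.card V) / k ≤ N'.card ∧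
      (∀ i ∈ N', rank i c ≤ (r : ℕ∞) ∧
        ((Finset.univ.filter fun c' : C => rank i c' ≤ (r : ℕ∞)) ∩ W).card < ℓ)

section RankEJRplus

variable {V C : Type*} [Fintype V] [Fintype C] [DecidableEq C]
  {rank : V → C → ℕ∞} {k : ℕ} {W : Finset C}

theorem RankEJRplus.exists_mem_rank_le_one (h : RankEJRplus rank k W)
    (hn : Fintype.card V ≤ k) {i : V} {c : C} (hc : rank i c ≤ 1) :
    ∃ c' ∈ W, rank i c' ≤ 1 := by
  by_cases hcW : c ∈ W
  · exact ⟨c, hcW, hc⟩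
  by_contra! hW
  refine h ⟨c, 1, 1, {i}, hcW, le_rfl, Fintype.card_pos_iff.mpr ⟨c⟩, le_rfl, ?_, ?_⟩
  · rw [Finset.card_singleton, Nat.cast_one, one_mul]
    exact div_le_one_of_le₀ (by exact_mod_cast hn) k.cast_nonneg
  · simp only [Finset.mem_singleton, forall_eq, Nat.cast_one, Nat.lt_one_iff,
      Finset.card_eq_zero, Finset.eq_empty_iff_forall_notMem, Finset.mem_inter,
      Finset.mem_filter, Finset.mem_univ, true_and]
    exact ⟨hc, fun c' ⟨hc', hc'W⟩ => (hW c' hc'W).not_ge hc'⟩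

theorem RankEJRplus.exists_le_card_inter (h : RankEJRplus rank k W) {c : C} (hcW : c ∉ W)
    {r ℓ : ℕ} (hr₁ : 1 ≤ r) (hr : r ≤ Fintype.card C) (hℓ₁ : 1 ≤ ℓ) (hℓ : ℓ ≤ k)
    (hc : ∀ i, rank i c ≤ r) :
    ∃ i, ℓ ≤ ((Finset.univ.filter fun c' => rank i c' ≤ r) ∩ W).card := by
  by_contra! hlt
  refine h ⟨c, r, ℓ, Finset.univ, hcW, hr₁, hr, hℓ₁, ?_, fun i _ => ⟨hc i, hlt i⟩⟩
  have hk : (0 : ℚ) < k := by exact_mod_cast hℓ₁.trans hℓ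
  rw [Finset.card_univ, div_le_iff₀ hk, mul_comm]
  exact mul_le_mul_of_nonneg_left (by exact_mod_cast hℓ) (Nat.cast_nonneg _)

end RankEJRplus

/-- in the 2-voter, 4-candidate instance with `k = 2` where voter 1
ranks `c1 ≻ c2 ≻ c3 ≻ c4` and voter 2 ranks `c4 ≻ c2 ≻ c3 ≻ c1`, no feasible
committee (of size at most 2) satisfies rank-EJR+.
(Candidate `cⱼ` is encoded as `j - 1 : Fin 4`.) -/
theorem rankejrplus_unsatisfiable_example :
    let rank : Fin 2 → Fin 4 → ℕ∞ := fun i c =>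
      ((![![1, 2, 3, 4], ![4, 2, 3, 1]] : Fin 2 → Fin 4 → ℕ) i c : ℕ∞)
    ∀ W : Finset (Fin 4), W.card ≤ 2 → ¬ RankEJRplus rank 2 W := by
  intro rank W hW hEJR
  have top : ∀ i c, rank i c ≤ 1 → c = ![0, 3] i := by decide
  have top_mem (i : Fin 2) : ![0, 3] i ∈ W := by
    obtain ⟨c, hcW, hc⟩ := hEJR.exists_mem_rank_le_one (i := i) (c := ![0, 3] i) le_rfl
      (by fin_cases i <;> decide)
    exact top i c hc ▸ hcW
  have hW : W = {0, 3} := (Finset.eq_of_subset_of_card_le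
    (Finset.insert_subset (top_mem 0) (Finset.singleton_subset_iff.mpr (top_mem 1))) hW).symm
  subst hW
  obtain ⟨i, hi⟩ := hEJR.exists_le_card_inter (c := 1) (r := 2) (ℓ := 2)
    (by decide) (by decide) (by decide) (by decide) le_rfl (by decide)
  revert hi
  fin_cases i <;> decide
end

section
/- For every approval instance, every feasible committee W satisfying EJR+ is ((ℓ−1)/2)-representative: for every natural number ℓ ≥ 1, every candidate c ∈ C∖W, and every group N' ⊆ N_c with |N'| ≥ ℓ·n/k, the average (1/|N'|)·Σ_{i∈N'} |A_i ∩ W| is at least (ℓ−1)/2. -/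
open Finset

/-!
Fix `j < ℓ`. By EJR+, fewer than `(j + 1)·n/k ≤ (j + 1)·|N'|/ℓ` voters of `N'` have at most `j`
approved members of `W`, so at least `|N'|·(ℓ - j - 1)/ℓ` of them have more than `j`. Counting
each voter once for every layer `j < |A_i ∩ W|` and summing the layer bounds over `j < ℓ` gives
`∑ |A_i ∩ W| ≥ |N'|·(ℓ - 1)/2`.
-/

theorem Finset.sum_card_filter_lt_le {ι : Type*} (s : Finset ι) (f : ι → ℕ) (m : ℕ) :
    ∑ j ∈ range m, #{i ∈ s | j < f i} ≤ ∑ i ∈ s, f i := by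
  simp only [card_filter]
  rw [sum_comm]
  refine sum_le_sum fun i _ => ?_
  calc ∑ j ∈ range m, (if j < f i then 1 else 0)
      = #{j ∈ range m | j < f i} := (card_filter _ _).symm
    _ ≤ #(range (f i)) := card_le_card fun j hj => mem_range.2 (mem_filter.1 hj).2
    _ = f i := card_range _

theorem sum_range_natCast_sub_succ {K : Type*} [Field K] [CharZero K] (ℓ : ℕ) :
    ∑ j ∈ range ℓ, ((ℓ : K) - (j + 1)) = ℓ * (ℓ - 1) / 2 := by
  have hgauss : (∑ j ∈ range ℓ, (j : K)) * 2 = ℓ * (ℓ - 1) := by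
    induction ℓ with
    | zero => simp
    | succ m ih =>
      rw [sum_range_succ]
      push_cast
      linear_combination ih
  simp only [sum_sub_distrib, sum_add_distrib, sum_const, card_range, nsmul_eq_mul]
  field_simp
  linear_combination -hgauss

theorem EJRplus.card_filter_card_inter_lt {V C : Type*} [Fintype V] [DecidableEq C]
    {A : V → Finset C} {k : ℕ} {W : Finset C} (h : EJRplus A k W) {c : C} (hc : c ∉ W)
    {N' : Finset V} (hN' : ∀ i ∈ N', c ∈ A i) {j : ℕ} (hj : 1 ≤ j) :
    (#{i ∈ N' | #(A i ∩ W) < j} : ℝ) < j * Fintype.card V / k := by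
  by_contra! hle
  refine h ⟨c, {i ∈ N' | #(A i ∩ W) < j}, j, hj, hc, ?_, fun i hi => ?_⟩
  · exact (Rat.cast_le (K := ℝ)).1 (by push_cast; exact hle)
  · rw [mem_filter] at hi
    exact ⟨hN' i hi.1, hi.2⟩

theorem EJRplus.le_card_filter_lt_card_inter {V C : Type*} [Fintype V] [DecidableEq C]
    {A : V → Finset C} {k : ℕ} {W : Finset C} (h : EJRplus A k W) {c : C} (hc : c ∉ W)
    {N' : Finset V} (hN' : ∀ i ∈ N', c ∈ A i) {ℓ : ℕ} (hℓ : 0 < ℓ)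
    (hsize : (ℓ : ℝ) * Fintype.card V / k ≤ #N') (j : ℕ) :
    (#N' : ℝ) - (j + 1) * #N' / ℓ ≤ #{i ∈ N' | j < #(A i ∩ W)} := by
  have hlow := h.card_filter_card_inter_lt hc hN' (Nat.succ_pos j)
  have hscale : ((j + 1 : ℕ) : ℝ) * Fintype.card V / k ≤ (j + 1) * #N' / ℓ := by
    have hℓ' : (0 : ℝ) < ℓ := Nat.cast_pos.2 hℓ
    calc ((j + 1 : ℕ) : ℝ) * Fintype.card V / k
        = (j + 1) / ℓ * (ℓ * Fintype.card V / k) := by push_cast; field_simp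
      _ ≤ (j + 1) / ℓ * #N' := by gcongr
      _ = (j + 1) * #N' / ℓ := by ring
  have hsplit := card_filter_add_card_filter_not (s := N') (fun i => j < #(A i ∩ W))
  simp only [not_lt, ← Nat.lt_succ_iff] at hsplit
  have : ((#{i ∈ N' | j < #(A i ∩ W)} : ℕ) : ℝ) + #{i ∈ N' | #(A i ∩ W) < j + 1} = #N' := by
    exact_mod_cast hsplit
  linarith

theorem ejrplus_implies_half_representative_general {V C : Type*} [Fintype V] [DecidableEq C]
    (A : V → Finset C) (k : ℕ) (W : Finset C) (h : EJRplus A k W) :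
    ∀ ℓ : ℕ, 1 ≤ ℓ → ∀ c : C, c ∉ W → ∀ N' : Finset V,
      (∀ i ∈ N', c ∈ A i) → (ℓ : ℝ) * (Fintype.card V) / k ≤ N'.card →
      ((ℓ : ℝ) - 1) / 2 ≤ (1 / (N'.card : ℝ)) * ∑ i ∈ N', ((A i ∩ W).card : ℝ) := by
  intro ℓ hℓ c hc N' hN' hsize
  -- an empty `N'` would itself violate EJR+
  have hN'pos : (0 : ℝ) < #N' :=
    ((Nat.cast_nonneg _).trans_lt (h.card_filter_card_inter_lt hc hN' hℓ)).trans_le hsize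
  have hℓ' : (ℓ : ℝ) ≠ 0 := by positivity
  rw [one_div, inv_mul_eq_div, le_div_iff₀ hN'pos]
  calc ((ℓ : ℝ) - 1) / 2 * #N'
      = #N' / ℓ * ∑ j ∈ range ℓ, ((ℓ : ℝ) - (j + 1)) := by
        rw [sum_range_natCast_sub_succ]; field_simp
    _ = ∑ j ∈ range ℓ, ((#N' : ℝ) - (j + 1) * #N' / ℓ) := by
        rw [mul_sum]; exact sum_congr rfl fun j _ => by field_simp
    _ ≤ ∑ j ∈ range ℓ, (#{i ∈ N' | j < #(A i ∩ W)} : ℝ) :=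
        sum_le_sum fun j _ => h.le_card_filter_lt_card_inter hc hN' hℓ hsize j
    _ ≤ ∑ i ∈ N', (#(A i ∩ W) : ℝ) := by exact_mod_cast N'.sum_card_filter_lt_le _ ℓ

/-- every feasible committee satisfying EJR+ is
`((ℓ−1)/2)`-representative: for every `ℓ ≥ 1`, candidate `c ∉ W`, and group
`N' ⊆ N_c` with `|N'| ≥ ℓ·n/k`, the average `(1/|N'|)·∑_{i∈N'} |A i ∩ W|` is at
least `(ℓ−1)/2`. -/
theorem ejrplus_implies_half_representative {V C : Type*} [Fintype V] [Fintype C]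
    [DecidableEq V] [DecidableEq C]
    (A : V → Finset C) (k : ℕ) (W : Finset C)
    (hn : 1 ≤ Fintype.card V) (hk1 : 1 ≤ k) (hk2 : k ≤ Fintype.card C)
    (hW : W.card ≤ k) (h : EJRplus A k W) :
    ∀ ℓ : ℕ, 1 ≤ ℓ → ∀ c : C, c ∉ W → ∀ N' : Finset V,
      (∀ i ∈ N', c ∈ A i) → (ℓ : ℝ) * (Fintype.card V) / k ≤ N'.card →
      ((ℓ : ℝ) - 1) / 2 ≤ (1 / (N'.card : ℝ)) * ∑ i ∈ N', ((A i ∩ W).card : ℝ) :=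
  ejrplus_implies_half_representative_general A k W h
end
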